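/- Let T > 0 and let (t_n)_{n∈ℤ} be a T-dense sequence. Then for every f ∈ H¹(ℝ) (identified with its continuous representative), ‖f − Vf‖_{L²} ≤ (T/π)·‖f'‖_{L²}, where V is the piecewise-constant approximation operator associated with (t_n). -/

import Mathlib

/-!
On each cell `[s_n, s_{n+1})` the error `f - Vf` equals `f - f(t_n)`, and `t_n` cuts the cell into
two pieces of length at most `T/2` on which `f - f(t_n)` vanishes at one endpoint. So everything
reduces to the one-sided Wirtinger inequality
`∫_a^b |∫_a^x φ|² dx ≤ (2(b-a)/π)² ∫_a^b |φ|²`. It follows from Cauchy–Schwarz with the weight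
`cos(ω(u-a))`, `ω = π/(2(b-a))`, which bounds `|∫_a^x φ|²` by
`(sin(ω(x-a))/ω) ∫_a^x |φ|²/cos(ω(u-a)) du`, followed by Fubini: integrating the first factor
over `x ∈ [u, b]` gives exactly `cos(ω(u-a))/ω²`, since `cos(ω(b-a)) = 0`.
-/

open MeasureTheory Real Filter

/-- `f ∈ H¹(ℝ)`, identified with its continuous representative. -/
structure MemH1 (f f' : ℝ → ℝ) : Prop where
  cont : Continuous f
  mem : MemLp f 2 (volume : Measure ℝ)
  mem' : MemLp f' 2 (volume : Measure ℝ)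
  ftc : ∀ a b : ℝ, f b - f a = ∫ u in a..b, f' u

/-- A strictly increasing sequence `(t_n)` with `t_n → ±∞` is `T`-dense if
`t_{n+1} − t_n ≤ T` for all `n`. -/
structure TDense (T : ℝ) (t : ℤ → ℝ) : Prop where
  mono : StrictMono t
  top : Tendsto t atTop atTop
  bot : Tendsto t atBot atBot
  dense : ∀ n : ℤ, t (n + 1) - t n ≤ T

/-- The midpoint `s_n = (t_{n−1} + t_n)/2`. -/
noncomputable def sPt (t : ℤ → ℝ) (n : ℤ) : ℝ := (t (n - 1) + t n) / 2

/-- The piecewise-constant approximation `(Vf)(x) = Σ_n f(t_n)·1_{[s_n,s_{n+1})}(x)`. -/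
noncomputable def Vop (t : ℤ → ℝ) (f : ℝ → ℝ) : ℝ → ℝ := fun x =>
  ∑' n : ℤ, Set.indicator (Set.Ico (sPt t n) (sPt t (n + 1))) (fun _ => f (t n)) x

open Set Function
open scoped ENNReal

theorem ENNReal.lintegral_sq_le_lintegral_mul_lintegral_sq_div {α : Type*} [MeasurableSpace α]
    {μ : Measure α} {g w : α → ℝ≥0∞} (hg : AEMeasurable g μ) (hw : AEMeasurable w μ)
    (hw0 : ∀ᵐ u ∂μ, w u ≠ 0) (hw_top : ∀ᵐ u ∂μ, w u ≠ ∞) :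
    (∫⁻ u, g u ∂μ) ^ 2 ≤ (∫⁻ u, w u ∂μ) * ∫⁻ u, g u ^ 2 / w u ∂μ := by
  have hg_eq : (fun u => w u ^ (1 / 2 : ℝ) * (g u ^ 2 / w u) ^ (1 / 2 : ℝ)) =ᵐ[μ] g := by
    filter_upwards [hw0, hw_top] with u h0 htop
    rw [← ENNReal.mul_rpow_of_nonneg _ _ (by norm_num), ENNReal.mul_div_cancel h0 htop,
      ← ENNReal.rpow_natCast, ← ENNReal.rpow_mul]
    norm_num
  have holder := ENNReal.lintegral_mul_norm_pow_le (g := fun u => g u ^ 2 / w u) hw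
    ((hg.pow_const 2).div hw) (by norm_num : (0 : ℝ) ≤ 1 / 2) (by norm_num : (0 : ℝ) ≤ 1 / 2)
    (by norm_num)
  rw [lintegral_congr_ae hg_eq] at holder
  calc (∫⁻ u, g u ∂μ) ^ 2
      ≤ ((∫⁻ u, w u ∂μ) ^ (1 / 2 : ℝ) * (∫⁻ u, g u ^ 2 / w u ∂μ) ^ (1 / 2 : ℝ)) ^ 2 := by
        gcongr
    _ = (∫⁻ u, w u ∂μ) * ∫⁻ u, g u ^ 2 / w u ∂μ := by
        rw [mul_pow, ← ENNReal.rpow_natCast, ← ENNReal.rpow_natCast, ← ENNReal.rpow_mul,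
          ← ENNReal.rpow_mul]
        norm_num

theorem eLpNorm_two_sq_eq_lintegral {α ε : Type*} [MeasurableSpace α] [ENorm ε]
    {μ : Measure α} (f : α → ε) :
    eLpNorm f 2 μ ^ 2 = ∫⁻ x, ‖f x‖ₑ ^ 2 ∂μ := by
  simpa using eLpNorm_nnreal_pow_eq_lintegral (f := f) (μ := μ) (p := 2) two_ne_zero

theorem lintegral_Ioc_mul_setLIntegral_Ioc_comm {μ : Measure ℝ} [SFinite μ] (a b : ℝ)
    {F G : ℝ → ℝ≥0∞} (hF : Measurable F) (hG : Measurable G) :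
    ∫⁻ x in Ioc a b, F x * ∫⁻ u in Ioc a x, G u ∂μ ∂μ =
      ∫⁻ u in Ioc a b, G u * ∫⁻ x in Icc u b, F x ∂μ ∂μ := by
  set K : ℝ → ℝ → ℝ≥0∞ := fun x u =>
    {p : ℝ × ℝ | p.2 ≤ p.1}.indicator (fun p => F p.1 * G p.2) (x, u)
  have hK : Measurable (uncurry K) :=
    ((hF.comp measurable_fst).mul (hG.comp measurable_snd)).indicator
      (measurableSet_le measurable_snd measurable_fst)
  have inner_x : ∀ x ∈ Ioc a b, ∫⁻ u in Ioc a b, K x u ∂μ = F x * ∫⁻ u in Ioc a x, G u ∂μ := by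
    intro x hx
    have hKx : K x = fun u => F x * (Iic x).indicator G u := by
      ext u
      by_cases h : u ≤ x <;> simp [K, h]
    rw [hKx, lintegral_const_mul _ (hG.indicator measurableSet_Iic),
      setLIntegral_indicator measurableSet_Iic, Iic_inter_Ioc_of_le hx.2]
  have inner_u : ∀ u ∈ Ioc a b, ∫⁻ x in Ioc a b, K x u ∂μ = G u * ∫⁻ x in Icc u b, F x ∂μ := by
    intro u hu
    have hKu : (fun x => K x u) = fun x => G u * (Ici u).indicator F x := by
      ext x
      by_cases h : u ≤ x <;> simp [K, h, mul_comm]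
    have hset : Ici u ∩ Ioc a b = Icc u b := by
      ext x
      simp only [mem_inter_iff, mem_Ici, mem_Ioc, mem_Icc]
      constructor
      · rintro ⟨hux, _, hxb⟩; exact ⟨hux, hxb⟩
      · rintro ⟨hux, hxb⟩; exact ⟨hux, hu.1.trans_le hux, hxb⟩
    rw [hKu, lintegral_const_mul _ (hF.indicator measurableSet_Ici),
      setLIntegral_indicator measurableSet_Ici, hset]
  rw [← setLIntegral_congr_fun measurableSet_Ioc inner_x,
    ← setLIntegral_congr_fun measurableSet_Ioc inner_u]
  exact lintegral_lintegral_swap hK.aemeasurable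

theorem setLIntegral_Ico_comp_sub_left (F : ℝ → ℝ≥0∞) (a b : ℝ) :
    ∫⁻ x in Ico a b, F (a + b - x) = ∫⁻ y in Ioc a b, F y := by
  rw [← lintegral_indicator measurableSet_Ico, ← lintegral_indicator measurableSet_Ioc,
    ← lintegral_sub_left_eq_self _ (a + b)]
  congr 1 with y
  have hmem : a + b - y ∈ Ico a b ↔ y ∈ Ioc a b := by
    simp only [mem_Ico, mem_Ioc]; constructor <;> rintro ⟨h1, h2⟩ <;> constructor <;> linarith
  by_cases hy : y ∈ Ioc a b
  · simp [indicator_of_mem (hmem.2 hy), indicator_of_mem hy]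
  · simp [indicator_of_notMem (mt hmem.1 hy), indicator_of_notMem hy]

theorem integral_cos_mul_sub (a x : ℝ) {ω : ℝ} (hω : ω ≠ 0) :
    ∫ u in a..x, cos (ω * (u - a)) = sin (ω * (x - a)) / ω := by
  simp only [mul_sub, intervalIntegral.integral_comp_mul_sub (fun u => cos u), hω, ne_eq,
    not_false_eq_true, sub_self, integral_cos, sin_zero, sub_zero, smul_eq_mul]
  field_simp

theorem integral_sin_mul_sub_div (a u b : ℝ) {ω : ℝ} (hω : ω ≠ 0) :
    ∫ x in u..b, sin (ω * (x - a)) / ω = (cos (ω * (u - a)) - cos (ω * (b - a))) / ω ^ 2 := by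
  simp only [mul_sub, intervalIntegral.integral_div, hω, ne_eq, not_false_eq_true,
    intervalIntegral.integral_comp_mul_sub (fun u => sin u), integral_sin, smul_eq_mul]
  field_simp

theorem setLIntegral_Icc_sin_mul_sub_div {a u b ω : ℝ} (hω : 0 < ω) (hau : a ≤ u) (hub : u ≤ b)
    (hωb : ω * (b - a) = π / 2) :
    ∫⁻ x in Icc u b, ENNReal.ofReal (sin (ω * (x - a)) / ω) =
      ENNReal.ofReal (cos (ω * (u - a))) * ENNReal.ofReal (1 / ω) ^ 2 := by
  have hsin : ∀ x ∈ Ioc u b, 0 ≤ sin (ω * (x - a)) / ω := fun x hx =>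
    div_nonneg (sin_nonneg_of_nonneg_of_le_pi (by nlinarith [hx.1])
      (by nlinarith [hx.2, pi_pos])) hω.le
  have hcos : 0 ≤ cos (ω * (u - a)) :=
    cos_nonneg_of_mem_Icc ⟨by nlinarith [pi_pos], by nlinarith⟩
  rw [← setLIntegral_congr Ioc_ae_eq_Icc, ← ofReal_integral_eq_lintegral_ofReal
    ((by fun_prop : Continuous fun x => sin (ω * (x - a)) / ω).integrableOn_Ioc)
    ((ae_restrict_mem measurableSet_Ioc).mono hsin), ← intervalIntegral.integral_of_le hub,
    integral_sin_mul_sub_div a u b hω.ne', hωb, cos_pi_div_two, sub_zero,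
    ← ENNReal.ofReal_pow (by positivity), ← ENNReal.ofReal_mul hcos]
  ring_nf

theorem enorm_intervalIntegral_sq_le_sin_mul_lintegral {φ : ℝ → ℝ} (hφ : Measurable φ)
    {a x ω : ℝ} (hω : 0 < ω) (hax : a ≤ x) (hx : ω * (x - a) < π / 2) :
    ‖∫ u in a..x, φ u‖ₑ ^ 2 ≤ ENNReal.ofReal (sin (ω * (x - a)) / ω) *
      ∫⁻ u in Ioc a x, ‖φ u‖ₑ ^ 2 / ENNReal.ofReal (cos (ω * (u - a))) := by
  have hcos : ∀ u ∈ Ioc a x, 0 < cos (ω * (u - a)) := fun u hu => by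
    apply cos_pos_of_mem_Ioo
    constructor <;> nlinarith [hu.1, hu.2, pi_pos]
  have hcont : Continuous fun u => cos (ω * (u - a)) := by fun_prop
  have hweight : ∫⁻ u in Ioc a x, ENNReal.ofReal (cos (ω * (u - a))) =
      ENNReal.ofReal (sin (ω * (x - a)) / ω) := by
    rw [← ofReal_integral_eq_lintegral_ofReal hcont.integrableOn_Ioc
      ((ae_restrict_mem measurableSet_Ioc).mono fun u hu => (hcos u hu).le),
      ← intervalIntegral.integral_of_le hax, integral_cos_mul_sub a x hω.ne']
  have htriangle : ‖∫ u in a..x, φ u‖ₑ ≤ ∫⁻ u in Ioc a x, ‖φ u‖ₑ := by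
    rw [intervalIntegral.integral_of_le hax]
    exact enorm_integral_le_lintegral_enorm _
  calc ‖∫ u in a..x, φ u‖ₑ ^ 2 ≤ (∫⁻ u in Ioc a x, ‖φ u‖ₑ) ^ 2 := by gcongr
    _ ≤ _ := by
      rw [← hweight]
      refine ENNReal.lintegral_sq_le_lintegral_mul_lintegral_sq_div
        hφ.enorm.aemeasurable hcont.measurable.ennreal_ofReal.aemeasurable ?_ ?_
      · filter_upwards [ae_restrict_mem measurableSet_Ioc] with u hu
        exact (ENNReal.ofReal_pos.2 (hcos u hu)).ne'
      · exact ae_of_all _ fun _ => ENNReal.ofReal_ne_top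

theorem lintegral_Ioc_enorm_intervalIntegral_sq_le {φ : ℝ → ℝ} (hφ : Measurable φ) {a b : ℝ}
    (hab : a < b) :
    ∫⁻ x in Ioc a b, ‖∫ u in a..x, φ u‖ₑ ^ 2 ≤
      ENNReal.ofReal (2 * (b - a) / π) ^ 2 * ∫⁻ u in Ioc a b, ‖φ u‖ₑ ^ 2 := by
  set ω := π / (2 * (b - a))
  have hω : 0 < ω := div_pos pi_pos (by linarith)
  have hωb : ω * (b - a) = π / 2 := by
    simp only [ω]; field_simp [(sub_pos.2 hab).ne']
  have hω_inv : 1 / ω = 2 * (b - a) / π := one_div_div _ _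
  have hlt : ∀ x ∈ Ioo a b, ω * (x - a) < π / 2 := fun x hx => by
    rw [← hωb]; exact mul_lt_mul_of_pos_left (by linarith [hx.2]) hω
  have hcos : ∀ u ∈ Ioo a b, 0 < cos (ω * (u - a)) := fun u hu =>
    cos_pos_of_mem_Ioo ⟨by nlinarith [hu.1, pi_pos], hlt u hu⟩
  have ae_Ioo : ∀ᵐ x ∂(volume.restrict (Ioc a b)), x ∈ Ioo a b := by
    rw [← Measure.restrict_congr_set Ioo_ae_eq_Ioc]
    exact ae_restrict_mem measurableSet_Ioo
  set S : ℝ → ℝ≥0∞ := fun x => ENNReal.ofReal (sin (ω * (x - a)) / ω)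
  set Q : ℝ → ℝ≥0∞ := fun u => ‖φ u‖ₑ ^ 2 / ENNReal.ofReal (cos (ω * (u - a)))
  have hS : Measurable S := by fun_prop
  have hQ : Measurable Q := by fun_prop
  calc ∫⁻ x in Ioc a b, ‖∫ u in a..x, φ u‖ₑ ^ 2
      ≤ ∫⁻ x in Ioc a b, S x * ∫⁻ u in Ioc a x, Q u := by
        refine lintegral_mono_ae (ae_Ioo.mono fun x hx => ?_)
        exact enorm_intervalIntegral_sq_le_sin_mul_lintegral hφ hω hx.1.le (hlt x hx)
    _ = ∫⁻ u in Ioc a b, Q u * ∫⁻ x in Icc u b, S x :=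
        lintegral_Ioc_mul_setLIntegral_Ioc_comm a b hS hQ
    _ = ∫⁻ u in Ioc a b, ENNReal.ofReal (1 / ω) ^ 2 * ‖φ u‖ₑ ^ 2 := by
        refine lintegral_congr_ae (ae_Ioo.mono fun u hu => ?_)
        dsimp only
        rw [setLIntegral_Icc_sin_mul_sub_div hω hu.1.le hu.2.le hωb, ← mul_assoc, ENNReal.div_mul_cancel
          (ENNReal.ofReal_pos.2 (hcos u hu)).ne' ENNReal.ofReal_ne_top, mul_comm]
    _ = _ := by rw [lintegral_const_mul _ (by fun_prop), hω_inv]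

theorem lintegral_Ico_enorm_intervalIntegral_sq_le {φ : ℝ → ℝ} (hφ : Measurable φ) {a b : ℝ}
    (hab : a < b) :
    ∫⁻ x in Ico a b, ‖∫ u in x..b, φ u‖ₑ ^ 2 ≤
      ENNReal.ofReal (2 * (b - a) / π) ^ 2 * ∫⁻ u in Ico a b, ‖φ u‖ₑ ^ 2 := by
  set ψ : ℝ → ℝ := fun v => φ (a + b - v)
  have hψ : Measurable ψ := by fun_prop
  have hflip : ∀ x, ∫ u in x..b, φ u = ∫ v in a..(a + b - x), ψ v := fun x => by
    simp only [ψ, intervalIntegral.integral_comp_sub_left φ (a + b)]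
    ring_nf
  calc ∫⁻ x in Ico a b, ‖∫ u in x..b, φ u‖ₑ ^ 2
      = ∫⁻ y in Ioc a b, ‖∫ v in a..y, ψ v‖ₑ ^ 2 := by
        simp only [hflip]
        exact setLIntegral_Ico_comp_sub_left (fun y => ‖∫ v in a..y, ψ v‖ₑ ^ 2) a b
    _ ≤ ENNReal.ofReal (2 * (b - a) / π) ^ 2 * ∫⁻ v in Ioc a b, ‖ψ v‖ₑ ^ 2 :=
        lintegral_Ioc_enorm_intervalIntegral_sq_le hψ hab
    _ = _ := by
        rw [← setLIntegral_Ico_comp_sub_left (fun v => ‖ψ v‖ₑ ^ 2)]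
        simp only [ψ, sub_sub_cancel]

theorem lintegral_Ico_enorm_sub_sq_le {f φ : ℝ → ℝ} (hφ : Measurable φ)
    (hf : ∀ x y, f y - f x = ∫ u in x..y, φ u) {a c b M : ℝ} (hac : a < c) (hcb : c < b)
    (hca : c - a ≤ M) (hbc : b - c ≤ M) :
    ∫⁻ x in Ico a b, ‖f x - f c‖ₑ ^ 2 ≤
      ENNReal.ofReal (2 * M / π) ^ 2 * ∫⁻ x in Ico a b, ‖φ x‖ₑ ^ 2 := by
  have hconst : ∀ {d}, d ≤ M → ENNReal.ofReal (2 * d / π) ^ 2 ≤ ENNReal.ofReal (2 * M / π) ^ 2 :=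
    fun hd => by gcongr
  have hleft : ∫⁻ x in Ico a c, ‖f x - f c‖ₑ ^ 2 ≤
      ENNReal.ofReal (2 * M / π) ^ 2 * ∫⁻ x in Ico a c, ‖φ x‖ₑ ^ 2 := by
    have hneg : ∀ x, ‖f x - f c‖ₑ = ‖∫ u in x..c, φ u‖ₑ := fun x => by
      rw [← hf x c, ← enorm_neg, neg_sub]
    simp only [hneg]
    exact (lintegral_Ico_enorm_intervalIntegral_sq_le hφ hac).trans
      (mul_le_mul_left (hconst hca) _)
  have hright : ∫⁻ x in Ico c b, ‖f x - f c‖ₑ ^ 2 ≤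
      ENNReal.ofReal (2 * M / π) ^ 2 * ∫⁻ x in Ico c b, ‖φ x‖ₑ ^ 2 := by
    simp only [hf c, setLIntegral_congr Ico_ae_eq_Ioc]
    exact (lintegral_Ioc_enorm_intervalIntegral_sq_le hφ hcb).trans
      (mul_le_mul_left (hconst hbc) _)
  rw [← Ico_union_Ico_eq_Ico hac.le hcb.le, lintegral_union measurableSet_Ico
    Ico_disjoint_Ico_same, lintegral_union measurableSet_Ico Ico_disjoint_Ico_same, mul_add]
  exact add_le_add hleft hright

theorem exists_mem_Ico_of_tendsto {α : Type*} [LinearOrder α] [NoMaxOrder α] {s : ℤ → α}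
    (hbot : Tendsto s atBot atBot) (htop : Tendsto s atTop atTop) (x : α) :
    ∃ n, x ∈ Ico (s n) (s (n + 1)) := by
  obtain ⟨N, hN⟩ := eventually_atTop.1 (htop.eventually_gt_atTop x)
  obtain ⟨n, hn, hmax⟩ := Int.exists_greatest_of_bdd (P := fun n => s n ≤ x)
    ⟨N, fun n hn => le_of_lt (not_le.1 fun h => (hN n h).not_ge hn)⟩
    (hbot.eventually (eventually_le_atBot x)).exists
  exact ⟨n, hn, not_le.1 fun h => by linarith [hmax _ h]⟩

section TDense

variable {T : ℝ} {t : ℤ → ℝ}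

theorem sPt_lt (ht : StrictMono t) (n : ℤ) : sPt t n < t n := by
  have := ht (sub_one_lt n); unfold sPt; linarith

theorem lt_sPt_add_one (ht : StrictMono t) (n : ℤ) : t n < sPt t (n + 1) := by
  have := ht (lt_add_one n); unfold sPt; rw [add_sub_cancel_right]; linarith

theorem sPt_strictMono (ht : StrictMono t) : StrictMono (sPt t) :=
  strictMono_int_of_lt_succ fun n => (sPt_lt ht n).trans (lt_sPt_add_one ht n)

theorem pairwise_disjoint_Ico_sPt (ht : StrictMono t) :
    Pairwise (Disjoint on fun n => Ico (sPt t n) (sPt t (n + 1))) := by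
  simpa only [Order.succ_eq_add_one] using
    (sPt_strictMono ht).monotone.pairwise_disjoint_on_Ico_succ

theorem Vop_eq_of_mem (ht : StrictMono t) (f : ℝ → ℝ) {n : ℤ} {x : ℝ}
    (hx : x ∈ Ico (sPt t n) (sPt t (n + 1))) : Vop t f x = f (t n) := by
  rw [Vop, tsum_eq_single n fun m hm => indicator_of_notMem
    (disjoint_left.1 (pairwise_disjoint_Ico_sPt ht hm.symm) hx) _]
  exact indicator_of_mem hx _

theorem iUnion_Ico_sPt (ht : TDense T t) :
    ⋃ n, Ico (sPt t n) (sPt t (n + 1)) = univ := by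
  have hbot : Tendsto (sPt t) atBot atBot :=
    tendsto_atBot_mono (fun n => (sPt_lt ht.mono n).le) ht.bot
  have htop : Tendsto (sPt t) atTop atTop := by
    refine tendsto_atTop_mono (fun n => ?_) (ht.top.comp (tendsto_atTop_add_const_right _ (-1)
      tendsto_id))
    have := lt_sPt_add_one ht.mono (n - 1); simp only [sub_add_cancel] at this
    exact this.le
  exact eq_univ_of_forall fun x => mem_iUnion.2 (exists_mem_Ico_of_tendsto hbot htop x)

theorem sub_sPt_le (ht : TDense T t) (n : ℤ) : t n - sPt t n ≤ T / 2 := by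
  have := ht.dense (n - 1); rw [sub_add_cancel] at this; unfold sPt; linarith

theorem sPt_add_one_sub_le (ht : TDense T t) (n : ℤ) :
    sPt t (n + 1) - t n ≤ T / 2 := by
  have := ht.dense n; unfold sPt; rw [add_sub_cancel_right]; linarith

theorem lintegral_eq_tsum_Ico_sPt (ht : TDense T t) (g : ℝ → ℝ≥0∞) :
    ∫⁻ x, g x = ∑' n, ∫⁻ x in Ico (sPt t n) (sPt t (n + 1)), g x := by
  rw [← lintegral_iUnion (fun _ => measurableSet_Ico) (pairwise_disjoint_Ico_sPt ht.mono),
    iUnion_Ico_sPt ht, setLIntegral_univ]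

end TDense

theorem norm_sub_Vop_le_general (T : ℝ) (t : ℤ → ℝ) (ht : TDense T t)
    (f f' : ℝ → ℝ) (hf : MemH1 f f') :
    eLpNorm (fun x => f x - Vop t f x) 2 (volume : Measure ℝ) ≤
      ENNReal.ofReal (T / π) * eLpNorm f' 2 (volume : Measure ℝ) := by
  set φ := hf.mem'.aestronglyMeasurable.mk f'
  have hφ : Measurable φ := hf.mem'.aestronglyMeasurable.stronglyMeasurable_mk.measurable
  have hae : f' =ᵐ[volume] φ := hf.mem'.aestronglyMeasurable.ae_eq_mk
  have hftc : ∀ x y, f y - f x = ∫ u in x..y, φ u := fun x y =>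
    (hf.ftc x y).trans (intervalIntegral.integral_congr_ae (hae.mono fun u hu _ => hu))
  have hpiece : ∀ n, ∫⁻ x in Ico (sPt t n) (sPt t (n + 1)), ‖f x - Vop t f x‖ₑ ^ 2 ≤
      ENNReal.ofReal (T / π) ^ 2 * ∫⁻ x in Ico (sPt t n) (sPt t (n + 1)), ‖φ x‖ₑ ^ 2 := by
    intro n
    rw [setLIntegral_congr_fun measurableSet_Ico fun x hx => by rw [Vop_eq_of_mem ht.mono f hx],
      show T / π = 2 * (T / 2) / π by ring]
    exact lintegral_Ico_enorm_sub_sq_le hφ hftc (sPt_lt ht.mono n) (lt_sPt_add_one ht.mono n)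
      (sub_sPt_le ht n) (sPt_add_one_sub_le ht n)
  rw [← ENNReal.pow_le_pow_left_iff two_ne_zero, mul_pow, eLpNorm_congr_ae hae,
    eLpNorm_two_sq_eq_lintegral, eLpNorm_two_sq_eq_lintegral, lintegral_eq_tsum_Ico_sPt ht,
    lintegral_eq_tsum_Ico_sPt ht, ← ENNReal.tsum_mul_left]
  exact ENNReal.tsum_le_tsum hpiece

/-- If `(t_n)` is `T`-dense, then for every `f ∈ H¹(ℝ)`,
`‖f − Vf‖_{L²} ≤ (T/π)‖f'‖_{L²}`. -/
theorem norm_sub_Vop_le (T : ℝ) (hT : 0 < T) (t : ℤ → ℝ) (ht : TDense T t)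
    (f f' : ℝ → ℝ) (hf : MemH1 f f') :
    eLpNorm (fun x => f x - Vop t f x) 2 (volume : Measure ℝ) ≤
      ENNReal.ofReal (T / π) * eLpNorm f' 2 (volume : Measure ℝ) :=
  norm_sub_Vop_le_general T t ht f f' hf
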